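/- Let Z ~ N(η, 2η) with η = x²/2 for some x > 0, and ε ≥ 0, δ ∈ (0,1). Then P[Z ≥ ε] − e^ε P[Z ≤ −ε] ≤ δ if and only if x ≤ B, where B is the unique positive root of Φ(x/2 − ε/x) − e^ε Φ(−x/2 − ε/x) = δ. -/

import Mathlib

open MeasureTheory ProbabilityTheory Filter

noncomputable def frob {m n : ℕ} (M : Matrix (Fin m) (Fin n) ℝ) : ℝ :=
  Real.sqrt (∑ i, ∑ j, (M i j)^2)

noncomputable def sv {m n : ℕ} (M : Matrix (Fin m) (Fin n) ℝ) : Fin n → ℝ :=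
  fun i => Real.sqrt ((show (Matrix.transpose M * M).IsHermitian by
    simpa using Matrix.isHermitian_conjTranspose_mul_self M).eigenvalues i)

/-- `σ` is the non-increasingly ordered tuple of singular values of `M`. -/
def IsSVals {m n : ℕ} (M : Matrix (Fin m) (Fin n) ℝ) (σ : Fin n → ℝ) : Prop :=
  Antitone σ ∧ ∃ e : Equiv.Perm (Fin n), σ = sv M ∘ e

/-- Standard normal CDF. -/
noncomputable def Phi (t : ℝ) : ℝ :=
  (Real.sqrt (2 * Real.pi))⁻¹ * ∫ u in Set.Iic t, Real.exp (-u^2/2)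

/-! Writing `Z = x N + x²/2` with `N` standard normal turns the left-hand side into
`g(x) = Φ(x/2 - ε/x) - e^ε Φ(-x/2 - ε/x)`. Since `(x/2 + ε/x)² - (x/2 - ε/x)² = 2ε`, the density
terms in `g'` combine to `g'(x) = φ(x/2 - ε/x) > 0`, so `g` is strictly increasing on `(0, ∞)`
and `g(x) ≤ g(B)` iff `x ≤ B`. -/

open Real Set

lemma Phi_eq_setIntegral_gaussianPDFReal (t : ℝ) :
    Phi t = ∫ u in Iic t, gaussianPDFReal 0 1 u := by
  rw [Phi, ← integral_const_mul]
  congr 1 with u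
  simp [gaussianPDFReal]

lemma hasDerivAt_Phi (t : ℝ) : HasDerivAt Phi (gaussianPDFReal 0 1 t) t := by
  have hint := integrable_gaussianPDFReal 0 1
  have hcont : Continuous (gaussianPDFReal 0 1) := by
    unfold gaussianPDFReal; fun_prop
  have hPhi : Phi = fun s => (∫ u in Iic 0, gaussianPDFReal 0 1 u) +
      ∫ u in (0 : ℝ)..s, gaussianPDFReal 0 1 u := by
    funext s
    rw [Phi_eq_setIntegral_gaussianPDFReal,
      ← intervalIntegral.integral_Iic_sub_Iic hint.integrableOn hint.integrableOn]
    ring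
  rw [hPhi]
  exact (intervalIntegral.integral_hasDerivAt_right hint.intervalIntegrable
    hcont.aestronglyMeasurable.stronglyMeasurableAtFilter hcont.continuousAt).const_add _

lemma gaussianReal_zero_one_Iic_toReal (t : ℝ) : (gaussianReal 0 1 (Iic t)).toReal = Phi t := by
  rw [gaussianReal_apply_eq_integral 0 one_ne_zero, ENNReal.toReal_ofReal
    (setIntegral_nonneg measurableSet_Iic fun u _ => gaussianPDFReal_nonneg _ _ _),
    Phi_eq_setIntegral_gaussianPDFReal]

lemma gaussianReal_eq_map_affine (μ σ : ℝ) :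
    gaussianReal μ (σ ^ 2).toNNReal = (gaussianReal 0 1).map (fun u => σ * u + μ) := by
  rw [show (fun u => σ * u + μ) = (· + μ) ∘ (σ * ·) from rfl,
    ← Measure.map_map (measurable_add_const μ) (measurable_const_mul σ),
    gaussianReal_map_const_mul, gaussianReal_map_add_const]
  congr 1
  · ring
  · ext; simp [sq_nonneg]

lemma gaussianReal_Iic_toReal (μ : ℝ) {σ : ℝ} (hσ : 0 < σ) (t : ℝ) :
    (gaussianReal μ (σ ^ 2).toNNReal (Iic t)).toReal = Phi ((t - μ) / σ) := by
  have hpre : (fun u => σ * u + μ) ⁻¹' Iic t = Iic ((t - μ) / σ) := by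
    ext u
    simp only [mem_preimage, mem_Iic, le_div_iff₀ hσ]
    constructor <;> intro h <;> linarith
  rw [gaussianReal_eq_map_affine, Measure.map_apply (by fun_prop) measurableSet_Iic, hpre,
    gaussianReal_zero_one_Iic_toReal]

lemma gaussianReal_Ici_toReal (μ : ℝ) {σ : ℝ} (hσ : 0 < σ) (t : ℝ) :
    (gaussianReal μ (σ ^ 2).toNNReal (Ici t)).toReal = Phi ((μ - t) / σ) := by
  have hpre : (fun u => -σ * u + μ) ⁻¹' Ici t = Iic ((μ - t) / σ) := by
    ext u
    simp only [mem_preimage, mem_Ici, mem_Iic, le_div_iff₀ hσ]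
    constructor <;> intro h <;> linarith
  rw [← neg_sq, gaussianReal_eq_map_affine, Measure.map_apply (by fun_prop) measurableSet_Ici,
    hpre, gaussianReal_zero_one_Iic_toReal]

noncomputable def gaussianPrivacyProfile (ε y : ℝ) : ℝ :=
  Phi (y / 2 - ε / y) - exp ε * Phi (-y / 2 - ε / y)

lemma hasDerivAt_gaussianPrivacyProfile (ε : ℝ) {y : ℝ} (hy : y ≠ 0) :
    HasDerivAt (gaussianPrivacyProfile ε) (gaussianPDFReal 0 1 (y / 2 - ε / y)) y := by
  have hquot : HasDerivAt (fun y : ℝ => ε / y) (-(ε / y ^ 2)) y := by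
    simpa [div_eq_mul_inv] using (hasDerivAt_inv hy).const_mul ε
  have hplus : HasDerivAt (fun y => Phi (y / 2 - ε / y))
      (gaussianPDFReal 0 1 (y / 2 - ε / y) * (1 / 2 - -(ε / y ^ 2))) y :=
    (hasDerivAt_Phi _).comp y (((hasDerivAt_id y).div_const 2).sub hquot)
  have hminus : HasDerivAt (fun y => Phi (-y / 2 - ε / y))
      (gaussianPDFReal 0 1 (-y / 2 - ε / y) * (-1 / 2 - -(ε / y ^ 2))) y :=
    (hasDerivAt_Phi _).comp y (((hasDerivAt_id y).neg.div_const 2).sub hquot)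
  have hdensity : exp ε * gaussianPDFReal 0 1 (-y / 2 - ε / y) =
      gaussianPDFReal 0 1 (y / 2 - ε / y) := by
    simp only [gaussianPDFReal, NNReal.coe_one, mul_one, sub_zero]
    rw [mul_left_comm, ← exp_add]
    congr 2
    field_simp
    ring
  refine (hplus.sub (hminus.const_mul (exp ε))).congr_deriv ?_
  linear_combination (1 / 2 - ε / y ^ 2) * hdensity

lemma strictMonoOn_gaussianPrivacyProfile (ε : ℝ) :
    StrictMonoOn (gaussianPrivacyProfile ε) (Ioi 0) := by
  refine strictMonoOn_of_deriv_pos (convex_Ioi 0) (fun y hy => ?_) fun y hy => ?_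
  · exact (hasDerivAt_gaussianPrivacyProfile ε (ne_of_gt hy)).continuousAt.continuousWithinAt
  · rw [interior_Ioi] at hy
    rw [(hasDerivAt_gaussianPrivacyProfile ε (ne_of_gt hy)).deriv]
    exact gaussianPDFReal_pos _ _ _ one_ne_zero

lemma gaussianReal_Ici_sub_exp_mul_Iic (ε : ℝ) {x : ℝ} (hx : 0 < x) :
    (gaussianReal (x ^ 2 / 2) (x ^ 2).toNNReal (Ici ε)).toReal
      - exp ε * (gaussianReal (x ^ 2 / 2) (x ^ 2).toNNReal (Iic (-ε))).toReal
      = gaussianPrivacyProfile ε x := by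
  have hupper : (x ^ 2 / 2 - ε) / x = x / 2 - ε / x := by field_simp
  have hlower : (-ε - x ^ 2 / 2) / x = -x / 2 - ε / x := by field_simp; ring
  rw [gaussianReal_Ici_toReal _ hx, gaussianReal_Iic_toReal _ hx, hupper, hlower,
    gaussianPrivacyProfile]

theorem stmt10_general (ε δ x B : ℝ) (hx : 0 < x)
    (hB : 0 < B)
    (hroot : Phi (B/2 - ε/B) - Real.exp ε * Phi (-B/2 - ε/B) = δ) :
    ((gaussianReal (x^2/2) (Real.toNNReal (x^2))) (Set.Ici ε)).toReal
      - Real.exp ε * ((gaussianReal (x^2/2) (Real.toNNReal (x^2))) (Set.Iic (-ε))).toReal ≤ δ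
    ↔ x ≤ B := by
  rw [gaussianReal_Ici_sub_exp_mul_Iic ε hx, ← hroot]
  exact (strictMonoOn_gaussianPrivacyProfile ε).le_iff_le hx hB

theorem stmt10 (ε δ x B : ℝ) (hε : 0 ≤ ε) (hδ : δ ∈ Set.Ioo (0:ℝ) 1) (hx : 0 < x)
    (hB : 0 < B)
    (hroot : Phi (B/2 - ε/B) - Real.exp ε * Phi (-B/2 - ε/B) = δ) :
    ((gaussianReal (x^2/2) (Real.toNNReal (x^2))) (Set.Ici ε)).toReal
      - Real.exp ε * ((gaussianReal (x^2/2) (Real.toNNReal (x^2))) (Set.Iic (-ε))).toReal ≤ δ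
    ↔ x ≤ B :=
  stmt10_general ε δ x B hx hB hroot
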